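/- Let β > 1 and G(z) = exp(exp((log z)/β)) for z ≥ 1. For each sufficiently large real k, let x_k be the unique solution of G'(x_k) = k (G is differentiable and convex for large arguments, so x_k exists and is unique for large k). Then x_k = (log k)^β · (1 + O((log log k)/(log k))) as k → ∞; consequently the Legendre transform satisfies G*(k) ≤ k·x_k ≤ k (log k)^β (1 + O((log log k)/(log k))). -/

import Mathlib

/-!
Put `x = exp t`. Then `G'(x) = exp (logSlope β t)` with
`logSlope β t = e^{t/β} + t/β - t - log β`, which is strictly increasing once `e^{t/β} ≥ β`, so
`G'(x) = k` becomes `logSlope β t = L := log k`; for large `L` this has a unique large solution,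
found by the intermediate value theorem below `t = β log (2L)`. Solving the equation for `e^{t/β}`
gives `x = (L + δ)^β` with `δ = (1 - 1/β) t + log β = O(log L)`, whence
`L^β ≤ x ≤ L^β (1 + O(log L / L))`. Finally, `G' ≥ k` beyond `x` and `G ≥ 0` bound every
`y k - G y` by `x k`.
-/

open Real Filter Set

/-- The Legendre transform `G*(y) = sup_{x ≥ 0} (x·y − G(x))`. -/
noncomputable def Fstar (G : ℝ → ℝ) (y : ℝ) : ℝ :=
  sSup {v : ℝ | ∃ x : ℝ, 0 ≤ x ∧ v = x * y - G x}

theorem exp_le_one_add_mul_exp {s a : ℝ} (hs : 0 ≤ s) (hsa : s ≤ a) :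
    exp s ≤ 1 + s * exp a := by
  -- `1 - s ≤ exp (-s)` gives `exp s ≤ 1 + s * exp s`
  have h : (1 - s) * exp s ≤ 1 := by
    have := mul_le_mul_of_nonneg_right (by linarith [add_one_le_exp (-s)] : 1 - s ≤ exp (-s))
      (exp_pos s).le
    rwa [← exp_add, neg_add_cancel, exp_zero] at this
  nlinarith [mul_le_mul_of_nonneg_left (exp_le_exp.2 hsa) hs]

theorem add_rpow_le_rpow_mul {L δ β : ℝ} (hL : 0 < L) (hδ : 0 ≤ δ) (hδL : δ ≤ L)
    (hβ : 0 ≤ β) :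
    (L + δ) ^ β ≤ L ^ β * (1 + β * exp β * (δ / L)) := by
  have hu : 0 ≤ δ / L := div_nonneg hδ hL.le
  have hu1 : δ / L ≤ 1 := (div_le_one hL).2 hδL
  calc (L + δ) ^ β = L ^ β * (1 + δ / L) ^ β := by
        rw [← mul_rpow hL.le (by positivity), mul_one_add, mul_div_cancel₀ δ hL.ne']
    _ ≤ L ^ β * exp (β * (δ / L)) := by
        gcongr
        rw [mul_comm, exp_mul]
        gcongr
        linarith [add_one_le_exp (δ / L)]
    _ ≤ L ^ β * (1 + β * exp β * (δ / L)) := by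
        gcongr
        calc exp (β * (δ / L)) ≤ 1 + β * (δ / L) * exp β :=
              exp_le_one_add_mul_exp (by positivity) (mul_le_of_le_one_right hβ hu1)
          _ = 1 + β * exp β * (δ / L) := by ring

theorem eventually_mul_log_add_le (a b : ℝ) : ∀ᶠ L in atTop, a * log L + b ≤ L := by
  have h : (fun L => a * log L + b) =o[atTop] id :=
    (isLittleO_log_id_atTop.const_mul_left a).add (Asymptotics.isLittleO_const_id_atTop b)
  filter_upwards [h.bound one_pos, eventually_ge_atTop 0] with L hL hL0
  rw [Real.norm_eq_abs, Real.norm_eq_abs, one_mul, id, abs_of_nonneg hL0] at hL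
  exact (le_abs_self _).trans hL

theorem Fstar_le_mul_of_slope_le {G : ℝ → ℝ} {k x : ℝ} (hG : ∀ y, 0 ≤ y → 0 ≤ G y)
    (hk : 0 ≤ k) (hx : 0 ≤ x) (hslope : ∀ y, x ≤ y → k * (y - x) ≤ G y - G x) :
    Fstar G k ≤ k * x := by
  refine Real.sSup_le ?_ (mul_nonneg hk hx)
  rintro v ⟨y, hy, rfl⟩
  rcases le_total y x with hyx | hxy
  · nlinarith [hG y hy]
  · nlinarith [hG x hx, hslope y hxy]

theorem Fstar_le_mul_of_le_deriv {G : ℝ → ℝ} {k x : ℝ} (hG : ∀ y, 0 ≤ y → 0 ≤ G y)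
    (hk : 0 ≤ k) (hx : 0 ≤ x) (hdiff : DifferentiableOn ℝ G (Ici x))
    (hderiv : ∀ y, x < y → k ≤ deriv G y) :
    Fstar G k ≤ k * x := by
  refine Fstar_le_mul_of_slope_le hG hk hx fun y hxy => ?_
  refine (convex_Ici x).mul_sub_le_image_sub_of_le_deriv hdiff.continuousOn
    (hdiff.mono interior_subset) ?_ x self_mem_Ici y hxy hxy
  simpa only [interior_Ici, mem_Ioi] using hderiv

noncomputable def logSlope (β t : ℝ) : ℝ := exp (t / β) + t / β - t - log β

theorem hasDerivAt_logSlope (β t : ℝ) :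
    HasDerivAt (logSlope β) (exp (t / β) / β + 1 / β - 1) t := by
  have h : HasDerivAt (fun t : ℝ => t / β) (1 / β) t := (hasDerivAt_id t).div_const β
  exact (((h.exp.add h).sub (hasDerivAt_id t)).sub_const (log β)).congr_deriv (by ring)

theorem continuous_logSlope (β : ℝ) : Continuous (logSlope β) := by
  unfold logSlope
  fun_prop

theorem strictMonoOn_logSlope {β : ℝ} (hβ : 0 < β) :
    StrictMonoOn (logSlope β) (Ici (β * log β)) := by
  refine strictMonoOn_of_deriv_pos (convex_Ici _) (continuous_logSlope β).continuousOn ?_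
  intro t ht
  rw [interior_Ici, mem_Ioi] at ht
  have hβt : β ≤ exp (t / β) := by
    calc β = exp (log β) := (exp_log hβ).symm
      _ ≤ exp (t / β) := exp_le_exp.2 ((le_div_iff₀ hβ).2 (by linarith))
  rw [(hasDerivAt_logSlope β t).deriv]
  have : 1 ≤ exp (t / β) / β := (one_le_div hβ).2 hβt
  have : 0 < 1 / β := by positivity
  linarith

theorem exp_eq_rpow_of_logSlope_eq {β t L : ℝ} (hβ : 0 < β) (h : logSlope β t = L) :
    exp t = (L + ((1 - 1 / β) * t + log β)) ^ β := by
  have hexp : exp (t / β) = L + ((1 - 1 / β) * t + log β) := by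
    rw [← h, logSlope]
    ring
  rw [← hexp, ← exp_mul, div_mul_cancel₀ t hβ.ne']

theorem hasDerivAt_exp_exp_log_div {β x : ℝ} (hβ : 0 < β) (hx : 0 < x) :
    HasDerivAt (fun z => exp (exp (log z / β))) (exp (logSlope β (log x))) x := by
  convert ((hasDerivAt_log hx.ne').div_const β).exp.exp using 1
  rw [logSlope, exp_sub, exp_sub, exp_add, exp_log hx, exp_log hβ]
  field_simp

theorem rpow_le_exp_of_logSlope_eq {β t L : ℝ} (hβ : 1 < β) (hL : 0 ≤ L) (ht : 0 ≤ t)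
    (h : logSlope β t = L) : L ^ β ≤ exp t := by
  have hδ : 0 ≤ (1 - 1 / β) * t + log β :=
    add_nonneg (mul_nonneg (by rw [sub_nonneg, div_le_one (by linarith)]; linarith) ht)
      (log_nonneg hβ.le)
  rw [exp_eq_rpow_of_logSlope_eq (by linarith) h]
  exact rpow_le_rpow hL (by linarith) (by linarith)

theorem exp_le_of_logSlope_eq {β t L : ℝ} (hβ : 1 < β) (hL : 1 ≤ log L)
    (hL' : 3 * β * log L ≤ L) (ht : 0 ≤ t) (ht' : t ≤ β * log (2 * L))
    (h : logSlope β t = L) : exp t ≤ L ^ β * (1 + 3 * β ^ 2 * exp β * (log L / L)) := by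
  have hβ0 : 0 < β := by linarith
  have hL0 : 0 < L := by nlinarith
  set δ := (1 - 1 / β) * t + log β
  have hδ0 : 0 ≤ δ :=
    add_nonneg (mul_nonneg (by rw [sub_nonneg, div_le_one hβ0]; linarith) ht) (log_nonneg hβ.le)
  -- `δ ≤ t + log β ≤ β (log 2 + log L) + log β`, and `log 2, log β / β ≤ 1 ≤ log L`
  have hδ : δ ≤ 3 * β * log L := by
    have h1 : δ ≤ t + log β := by
      have : 0 ≤ t / β := div_nonneg ht hβ0.le
      simp only [δ, sub_mul, one_div_mul_eq_div]
      linarith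
    have h2 : log 2 ≤ 1 := by linarith [log_le_sub_one_of_pos (two_pos (α := ℝ))]
    have h3 : log β ≤ β := by linarith [log_le_sub_one_of_pos hβ0]
    rw [log_mul two_ne_zero hL0.ne'] at ht'
    nlinarith
  calc exp t = (L + δ) ^ β := exp_eq_rpow_of_logSlope_eq hβ0 h
    _ ≤ L ^ β * (1 + β * exp β * (δ / L)) :=
        add_rpow_le_rpow_mul hL0 hδ0 (hδ.trans hL') hβ0.le
    _ ≤ L ^ β * (1 + β * exp β * (3 * β * log L / L)) := by gcongr
    _ = L ^ β * (1 + 3 * β ^ 2 * exp β * (log L / L)) := by ring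

theorem eventually_le_logSlope_mul_log_two_mul {β : ℝ} (hβ : 0 < β) :
    ∀ᶠ L in atTop, L ≤ logSlope β (β * log (2 * L)) := by
  filter_upwards [eventually_mul_log_add_le (β - 1) ((β - 1) * log 2 + log β),
    eventually_gt_atTop 0] with L hL hL0
  rw [logSlope, mul_div_cancel_left₀ _ hβ.ne', exp_log (by positivity),
    log_mul two_ne_zero hL0.ne']
  linarith

theorem eventually_exists_logSlope_eq_and_bounds {β t₀ : ℝ} (hβ : 1 < β) (ht₀ : 0 ≤ t₀)
    (ht₀β : β * log β ≤ t₀) :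
    ∀ᶠ L in atTop, (∃ t, t₀ ≤ t ∧ logSlope β t = L) ∧
      ∀ t, t₀ ≤ t → logSlope β t = L →
        L ^ β ≤ exp t ∧ exp t ≤ L ^ β * (1 + 3 * β ^ 2 * exp β * (log L / L)) := by
  have hβ0 : 0 < β := by linarith
  have hlog2 : Tendsto (fun L => β * log (2 * L)) atTop atTop :=
    (tendsto_log_atTop.comp (tendsto_id.const_mul_atTop two_pos)).const_mul_atTop hβ0
  filter_upwards [eventually_ge_atTop (logSlope β t₀), hlog2.eventually_ge_atTop t₀,
    eventually_le_logSlope_mul_log_two_mul hβ0, tendsto_log_atTop.eventually_ge_atTop 1,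
    eventually_mul_log_add_le (3 * β) 0] with L hψt₀ ht₀L hψL hlogL hL
  rw [add_zero] at hL
  have hmono := (strictMonoOn_logSlope hβ0).mono (Ici_subset_Ici.2 ht₀β)
  refine ⟨?_, fun t ht hψt => ⟨?_, ?_⟩⟩
  · obtain ⟨t, ht, hψt⟩ := intermediate_value_Icc ht₀L (continuous_logSlope β).continuousOn
      ⟨hψt₀, hψL⟩
    exact ⟨t, ht.1, hψt⟩
  · exact rpow_le_exp_of_logSlope_eq hβ (by nlinarith) (ht₀.trans ht) hψt
  · refine exp_le_of_logSlope_eq hβ hlogL hL (ht₀.trans ht) ?_ hψt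
    exact hmono.le_iff_le ht ht₀L |>.1 (hψt ▸ hψL)

theorem hasDerivAt_of_eq_exp_exp {β x : ℝ} {G : ℝ → ℝ} (hβ : 0 < β)
    (hG : ∀ z, 1 ≤ z → G z = exp (exp (log z / β))) (hx : 1 < x) :
    HasDerivAt G (exp (logSlope β (log x))) x :=
  (hasDerivAt_exp_exp_log_div hβ (by linarith)).congr_of_eventuallyEq <|
    eventually_of_mem (Ioi_mem_nhds hx) fun z hz => hG z (le_of_lt hz)

theorem deriv_eq_iff_logSlope_eq {β x k : ℝ} {G : ℝ → ℝ} (hβ : 0 < β)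
    (hG : ∀ z, 1 ≤ z → G z = exp (exp (log z / β))) (hx : 1 < x) (hk : 0 < k) :
    deriv G x = k ↔ logSlope β (log x) = log k := by
  rw [(hasDerivAt_of_eq_exp_exp hβ hG hx).deriv]
  exact ⟨fun h => by rw [← h, log_exp], fun h => by rw [h, exp_log hk]⟩

theorem Fstar_le_mul_of_deriv_eq {β x k : ℝ} {G : ℝ → ℝ} (hβ : 0 < β)
    (hG_nonneg : ∀ y, 0 ≤ y → 0 ≤ G y)
    (hG : ∀ z, 1 ≤ z → G z = exp (exp (log z / β)))
    (hx : 1 < x) (hlog : β * log β ≤ log x) (hxk : deriv G x = k) :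
    Fstar G k ≤ k * x := by
  have hG' : ∀ y, x ≤ y → HasDerivAt G (exp (logSlope β (log y))) y :=
    fun y hy => hasDerivAt_of_eq_exp_exp hβ hG (hx.trans_le hy)
  rw [(hG' x le_rfl).deriv] at hxk
  subst hxk
  refine Fstar_le_mul_of_le_deriv hG_nonneg (exp_pos _).le (by linarith)
    (fun y hy => (hG' y hy).differentiableAt.differentiableWithinAt) fun y hy => ?_
  have hlogy : log x ≤ log y := log_le_log (by linarith) hy.le
  rw [(hG' y hy.le).deriv, exp_le_exp]
  exact (strictMonoOn_logSlope hβ).monotoneOn hlog (hlog.trans hlogy) hlogy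

theorem critical_point_asymptotics_expexp_general (β : ℝ) (hβ : 1 < β) (G : ℝ → ℝ)
    (hG_nonneg : ∀ x : ℝ, 0 ≤ x → 0 ≤ G x)
    (hG_eq : ∀ z : ℝ, 1 ≤ z → G z = Real.exp (Real.exp (Real.log z / β))) :
    ∃ X₀ : ℝ, 1 < X₀ ∧ ∃ K C : ℝ, 0 < C ∧ ∀ k : ℝ, K ≤ k →
      (∃! x : ℝ, X₀ ≤ x ∧ deriv G x = k) ∧
      ∀ x : ℝ, X₀ ≤ x → deriv G x = k →
        |x - Real.log k ^ β| ≤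
            C * Real.log k ^ β * (Real.log (Real.log k) / Real.log k) ∧
        Fstar G k ≤ k * x ∧
        k * x ≤ k * Real.log k ^ β *
          (1 + C * (Real.log (Real.log k) / Real.log k)) := by
  have hβ0 : 0 < β := by linarith
  set t₀ := max 1 (β * log β)
  have ht₀ : 0 < t₀ := lt_max_of_lt_left one_pos
  have ht₀β : β * log β ≤ t₀ := le_max_right _ _
  have hX₀ : 1 < exp t₀ := one_lt_exp_iff.2 ht₀
  have hlog : ∀ x, exp t₀ ≤ x → t₀ ≤ log x :=
    fun x hx => (le_log_iff_exp_le (by linarith)).2 hx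
  have hcrit : ∀ k, 0 < k → ∀ x, exp t₀ ≤ x → (deriv G x = k ↔ logSlope β (log x) = log k) :=
    fun k hk x hx => deriv_eq_iff_logSlope_eq hβ0 hG_eq (hX₀.trans_le hx) hk
  obtain ⟨L₀, hL₀⟩ := eventually_atTop.1 <|
    eventually_exists_logSlope_eq_and_bounds hβ ht₀.le ht₀β
  refine ⟨exp t₀, hX₀, exp L₀, 3 * β ^ 2 * exp β, by positivity, fun k hk => ?_⟩
  have hk0 : 0 < k := (exp_pos L₀).trans_le hk
  obtain ⟨⟨t, ht, hψt⟩, hbounds⟩ := hL₀ (log k) ((le_log_iff_exp_le hk0).2 hk)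
  have hinj : InjOn (logSlope β) (Ici t₀) :=
    ((strictMonoOn_logSlope hβ0).mono (Ici_subset_Ici.2 ht₀β)).injOn
  refine ⟨⟨exp t, ⟨exp_le_exp.2 ht, (hcrit k hk0 _ (exp_le_exp.2 ht)).2 (by rwa [log_exp])⟩,
    fun y ⟨hy, hyk⟩ => ?_⟩, fun x hx hxk => ?_⟩
  · rw [← exp_log (one_pos.trans (hX₀.trans_le hy))]
    exact congrArg exp (hinj (hlog y hy) ht (((hcrit k hk0 y hy).1 hyk).trans hψt.symm))
  · obtain ⟨hlow, hup⟩ := hbounds (log x) (hlog x hx) ((hcrit k hk0 x hx).1 hxk)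
    rw [exp_log (by linarith)] at hlow hup
    refine ⟨abs_le.2 ⟨by nlinarith, by linarith⟩,
      Fstar_le_mul_of_deriv_eq hβ0 hG_nonneg hG_eq (by linarith)
        (ht₀β.trans (hlog x hx)) hxk, ?_⟩
    rw [mul_assoc]
    exact mul_le_mul_of_nonneg_left hup hk0.le

/-- Let `β > 1` and `G(z) = exp(exp((log z)/β))` for `z ≥ 1`. For large `k` the
equation `G'(x_k) = k` has a unique solution among large arguments, and
`x_k = (log k)^β·(1 + O((log log k)/(log k)))`; consequently
`G*(k) ≤ k·x_k ≤ k·(log k)^β·(1 + O((log log k)/(log k)))`. -/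
theorem critical_point_asymptotics_expexp (β : ℝ) (hβ : 1 < β) (G : ℝ → ℝ)
    (hG_mono : MonotoneOn G (Set.Ici 0))
    (hG_nonneg : ∀ x : ℝ, 0 ≤ x → 0 ≤ G x)
    (hG_eq : ∀ z : ℝ, 1 ≤ z → G z = Real.exp (Real.exp (Real.log z / β))) :
    ∃ X₀ : ℝ, 1 < X₀ ∧ ∃ K C : ℝ, 0 < C ∧ ∀ k : ℝ, K ≤ k →
      (∃! x : ℝ, X₀ ≤ x ∧ deriv G x = k) ∧
      ∀ x : ℝ, X₀ ≤ x → deriv G x = k →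
        |x - Real.log k ^ β| ≤
            C * Real.log k ^ β * (Real.log (Real.log k) / Real.log k) ∧
        Fstar G k ≤ k * x ∧
        k * x ≤ k * Real.log k ^ β *
          (1 + C * (Real.log (Real.log k) / Real.log k)) :=
  critical_point_asymptotics_expexp_general β hβ G hG_nonneg hG_eq
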